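/- For all T > 0, α ≥ 0, R > 0, M > 0 and τ > 0 there exists a constant C > 0 such that: for every t₀ ∈ [τ, ∞), every probability measure μ₀ on ℝ^d with ∫|u|² dμ₀(u) ≤ M, every x₀ ∈ ℝ^d with |x₀| ≤ R, and every absolutely continuous f : [0,T] → ℝ^d with f(0) = x₀, derivative ḟ ∈ L²([0,T]; ℝ^d) and J_{t₀,μ₀}(f) ≤ α, one has ∫₀ᵀ |ḟ(s)|² ds ≤ C. -/

import Mathlib

/-!
Along a path `f`, the drift mismatch is `f' + b`, where `b t` collects the confining, mean-field
and self-interaction forces. The gradients grow at most linearly and the weights `t₀ / (t₀ + t)`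
and `t / (t₀ + t)` are at most one, so `‖b t‖ ≤ K₁ + K₂ φ t` with `φ t = ∫₀ᵗ ‖f'‖`, uniformly in
`t₀` and `μ₀`. Hence `‖f'‖ ≤ ‖f' + b‖ + K₁ + K₂ φ`; integrating, and using
`∫₀ᵀ ‖f' + b‖ ≤ (T + α) / 2`, gives `φ t ≤ c + K₂ ∫₀ᵗ φ`, so Grönwall bounds `φ` on `[0, T]`,
and `‖f'‖² ≤ 2 ‖f' + b‖² + 2 (K₁ + K₂ sup φ)²` integrates to the claim.
-/

open MeasureTheory Set

noncomputable section

abbrev Ed (d : ℕ) : Type := EuclideanSpace ℝ (Fin d)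

/-- `f` is absolutely continuous on `[0,T]` with (integrable) derivative `f'`
whose norm is square integrable. -/
def HasL2Deriv {d : ℕ} (T : ℝ) (f f' : ℝ → Ed d) : Prop :=
  IntervalIntegrable f' volume 0 T ∧
  IntervalIntegrable (fun s => ‖f' s‖ ^ 2) volume 0 T ∧
  ∀ t ∈ Icc (0:ℝ) T, f t = f 0 + ∫ s in (0:ℝ)..t, f' s

/-- The drift mismatch appearing in the rate function of the generalized
self-interacting diffusion with initial data `(t₀, μ₀)`. -/
def drift {d : ℕ} (V F : Ed d → ℝ) (t₀ : ℝ) (μ₀ : Measure (Ed d))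
    (f f' : ℝ → Ed d) (t : ℝ) : Ed d :=
  f' t + gradient V (f t) + (t₀ / (t₀ + t)) • (∫ u, gradient F (f t - u) ∂μ₀)
    + (1 / (t₀ + t)) • (∫ s in (0:ℝ)..t, gradient F (f t - f s))

open NNReal Real Filter Topology

section MeanField

variable {E F : Type*} [NormedAddCommGroup E] [NormedAddCommGroup F] {g : E → F} {K : ℝ≥0}

theorem LipschitzWith.norm_le_add_mul_norm (hg : LipschitzWith K g) (x : E) :
    ‖g x‖ ≤ ‖g 0‖ + K * ‖x‖ := by
  calc ‖g x‖ ≤ ‖g 0‖ + ‖g x - g 0‖ := norm_le_insert' _ _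
    _ ≤ ‖g 0‖ + K * ‖x‖ := by simpa using hg.norm_sub_le x 0

theorem LipschitzWith.norm_comp_sub_le (hg : LipschitzWith K g) (x u : E) :
    ‖g (x - u)‖ ≤ ‖g 0‖ + K * ‖x‖ + K * ‖u‖ := by
  calc ‖g (x - u)‖ ≤ ‖g 0‖ + K * ‖x - u‖ := hg.norm_le_add_mul_norm _
    _ ≤ ‖g 0‖ + K * ‖x‖ + K * ‖u‖ := by
      rw [add_assoc, ← mul_add]
      gcongr
      exact _root_.norm_sub_le x u

variable [MeasurableSpace E] {μ : Measure E}

theorem LipschitzWith.norm_integral_comp_sub_le [NormedSpace ℝ F] [IsProbabilityMeasure μ]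
    (hg : LipschitzWith K g) (hμ : Integrable (fun u => ‖u‖) μ) (x : E) :
    ‖∫ u, g (x - u) ∂μ‖ ≤ ‖g 0‖ + K * ‖x‖ + K * ∫ u, ‖u‖ ∂μ := by
  calc ‖∫ u, g (x - u) ∂μ‖ ≤ ∫ u, (‖g 0‖ + K * ‖x‖ + K * ‖u‖) ∂μ :=
        norm_integral_le_of_norm_le ((integrable_const _).add (hμ.const_mul K))
          (.of_forall (hg.norm_comp_sub_le x))
    _ = ‖g 0‖ + K * ‖x‖ + K * ∫ u, ‖u‖ ∂μ := by
      rw [integral_add (integrable_const _) (hμ.const_mul K), integral_const, integral_const_mul]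
      simp

variable [BorelSpace E] [SecondCountableTopology E]

theorem LipschitzWith.integrable_comp_sub [IsFiniteMeasure μ] (hg : LipschitzWith K g)
    (hμ : Integrable (fun u => ‖u‖) μ) (x : E) : Integrable (fun u => g (x - u)) μ :=
  ((integrable_const _).add (hμ.const_mul K)).mono'
    (hg.continuous.comp (continuous_sub_left x)).aestronglyMeasurable
    (.of_forall (hg.norm_comp_sub_le x))

theorem LipschitzWith.integral_comp_sub [NormedSpace ℝ F] [IsProbabilityMeasure μ]
    (hg : LipschitzWith K g) (hμ : Integrable (fun u => ‖u‖) μ) :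
    LipschitzWith K (fun x => ∫ u, g (x - u) ∂μ) := by
  refine LipschitzWith.of_dist_le_mul fun x y => ?_
  rw [dist_eq_norm, dist_eq_norm,
    ← integral_sub (hg.integrable_comp_sub hμ x) (hg.integrable_comp_sub hμ y)]
  simpa using norm_integral_le_of_norm_le_const (μ := μ) (.of_forall fun u => by
    simpa using hg.norm_sub_le (x - u) (y - u))

end MeanField

theorem integral_norm_le_of_integrable_norm_sq {E : Type*} [NormedAddCommGroup E]
    [MeasurableSpace E] [OpensMeasurableSpace E] {μ : Measure E} [IsProbabilityMeasure μ]
    (h : Integrable (fun u => ‖u‖ ^ 2) μ) :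
    Integrable (fun u => ‖u‖) μ ∧ ∫ u, ‖u‖ ∂μ ≤ (1 + ∫ u, ‖u‖ ^ 2 ∂μ) / 2 := by
  have hmeas : AEStronglyMeasurable (fun u : E => ‖u‖) μ :=
    continuous_norm.measurable.aestronglyMeasurable
  have hint : Integrable (fun u : E => ‖u‖) μ :=
    ((memLp_two_iff_integrable_sq_norm hmeas).2 (by simpa using h)).integrable one_le_two
  refine ⟨hint, ?_⟩
  calc ∫ u, ‖u‖ ∂μ ≤ ∫ u, (1 + ‖u‖ ^ 2) / 2 ∂μ :=
        integral_mono hint (((integrable_const 1).add h).div_const 2) fun u => by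
          nlinarith [sq_nonneg (‖u‖ - 1)]
    _ = (1 + ∫ u, ‖u‖ ^ 2 ∂μ) / 2 := by
      rw [integral_div, integral_add (integrable_const 1) h, integral_const]
      simp

theorem le_mul_exp_of_le_add_mul_integral {φ : ℝ → ℝ} {a b c K : ℝ} (hK : 0 ≤ K)
    (hφ : ContinuousOn φ (Icc a b)) (h : ∀ t ∈ Icc a b, φ t ≤ c + K * ∫ s in a..t, φ s) :
    ∀ t ∈ Icc a b, φ t ≤ c * exp (K * (t - a)) := by
  set Ψ := fun t => ∫ s in a..t, φ s
  have hΨ : ContinuousOn Ψ (Icc a b) := by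
    by_cases hab : a ≤ b
    · rw [← uIcc_of_le hab]
      exact intervalIntegral.continuousOn_primitive_interval
        (by rw [uIcc_of_le hab]; exact hφ.integrableOn_Icc)
    · simp [Icc_eq_empty hab]
  have hΨ' : ∀ t ∈ Ico a b, HasDerivWithinAt Ψ (φ t) (Ici t) t := by
    intro t ht
    have hnhds : Icc a b ∈ 𝓝[>] t := Icc_mem_nhdsGT_of_mem ht
    exact intervalIntegral.integral_hasDerivWithinAt_right
      ((hφ.mono (Icc_subset_Icc le_rfl ht.2.le)).intervalIntegrable_of_Icc ht.1)
      ((hφ.stronglyMeasurableAtFilter_nhdsWithin measurableSet_Icc t).filter_mono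
        (nhdsWithin_le_of_mem hnhds))
      ((hφ t (Ico_subset_Icc_self ht)).mono_of_mem_nhdsWithin hnhds)
  have hΨ_le := le_gronwallBound_of_liminf_deriv_right_le (δ := 0) (K := K) (ε := c) hΨ
    (fun t ht _ hr => (hΨ' t ht).liminf_right_slope_le hr) (by simp [Ψ])
    (fun t ht => by linarith [h t (Ico_subset_Icc_self ht)])
  intro t ht
  calc φ t ≤ c + K * gronwallBound 0 K c (t - a) := by
        linarith [h t ht, mul_le_mul_of_nonneg_left (hΨ_le t ht) hK]
    _ = c * exp (K * (t - a)) := by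
        rcases hK.eq_or_lt with rfl | hK
        · simp [gronwallBound_K0]
        · rw [gronwallBound_of_K_ne_0 hK.ne']
          field_simp
          ring

section IntervalIntegral

variable {E F : Type*} [NormedAddCommGroup E] [NormedAddCommGroup F] [NormedSpace ℝ F] {T : ℝ}

theorem continuousOn_intervalIntegral_comp_sub {g : E → F} (hg : Continuous g) {f : ℝ → E}
    {a b : ℝ} (hf : ContinuousOn f (Icc a b)) :
    ContinuousOn (fun t => ∫ s in a..t, g (f t - f s)) (Icc a b) := by
  by_cases hab : a ≤ b
  swap
  · simp [Icc_eq_empty hab]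
  set f' := IccExtend hab ((Icc a b).domRestrict f)
  have hf' : Continuous f' := continuous_IccExtend_iff.2 hf.domRestrict
  have hf'_eq : ∀ t ∈ Icc a b, f' t = f t := fun t ht => IccExtend_of_mem hab _ ht
  refine (intervalIntegral.continuous_parametric_intervalIntegral_of_continuous
    (f := fun t s => g (f' t - f' s)) (by fun_prop) continuous_id).continuousOn.congr
    fun t ht => intervalIntegral.integral_congr fun s hs => ?_
  rw [uIcc_of_le ht.1] at hs
  simp only [hf'_eq t ht, hf'_eq s ⟨hs.1, hs.2.trans ht.2⟩]

theorem norm_one_div_add_smul_integral_le {g : ℝ → F} {t₀ t C : ℝ} (ht₀ : 0 ≤ t₀) (ht : 0 ≤ t)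
    (hg : ∀ s ∈ Icc 0 t, ‖g s‖ ≤ C) : ‖(1 / (t₀ + t)) • ∫ s in 0..t, g s‖ ≤ C := by
  have hC : 0 ≤ C := (norm_nonneg _).trans (hg 0 ⟨le_rfl, ht⟩)
  have hint : ‖∫ s in 0..t, g s‖ ≤ C * t := by
    have := intervalIntegral.norm_integral_le_of_norm_le_const
      fun s hs => hg s (by rw [uIoc_of_le ht] at hs; exact Ioc_subset_Icc_self hs)
    rwa [sub_zero, abs_of_nonneg ht] at this
  rcases (add_nonneg ht₀ ht).eq_or_lt with h0 | hpos
  · simp [← h0, hC]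
  rw [norm_smul, Real.norm_of_nonneg (by positivity), one_div, inv_mul_le_iff₀ hpos]
  nlinarith

theorem intervalIntegral_le_half_add_integral_sq {g : ℝ → ℝ} (hT : 0 ≤ T)
    (hg : IntervalIntegrable g volume 0 T)
    (hg2 : IntervalIntegrable (fun t => g t ^ 2) volume 0 T) :
    ∫ t in 0..T, g t ≤ (T + ∫ t in 0..T, g t ^ 2) / 2 := by
  calc ∫ t in 0..T, g t ≤ ∫ t in 0..T, (1 + g t ^ 2) / 2 :=
        intervalIntegral.integral_mono_on hT hg ((intervalIntegrable_const.add hg2).div_const 2)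
          fun t _ => by nlinarith [sq_nonneg (g t - 1)]
    _ = (T + ∫ t in 0..T, g t ^ 2) / 2 := by
      rw [intervalIntegral.integral_div, intervalIntegral.integral_add intervalIntegrable_const hg2]
      simp

theorem integral_le_mul_exp_of_le_add_mul_integral {ψ h : ℝ → ℝ} {K₁ K₂ : ℝ} (hT : 0 ≤ T)
    (hK₁ : 0 ≤ K₁) (hK₂ : 0 ≤ K₂) (hψ : IntervalIntegrable ψ volume 0 T)
    (hh : IntervalIntegrable h volume 0 T) (hh_nonneg : ∀ t ∈ Icc 0 T, 0 ≤ h t)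
    (hψh : ∀ t ∈ Icc 0 T, ψ t ≤ h t + K₁ + K₂ * ∫ s in 0..t, ψ s) :
    ∀ t ∈ Icc 0 T, ∫ s in 0..t, ψ s ≤ ((∫ s in 0..T, h s) + K₁ * T) * exp (K₂ * t) := by
  set φ := fun t => ∫ s in 0..t, ψ s
  have hφ : ContinuousOn φ (Icc 0 T) := by
    simpa [uIcc_of_le hT] using intervalIntegral.continuousOn_primitive_interval' hψ left_mem_uIcc
  simpa using le_mul_exp_of_le_add_mul_integral hK₂ hφ fun t ht => by
    have hsub : uIcc 0 t ⊆ uIcc 0 T := uIcc_subset_uIcc_left (by rw [uIcc_of_le hT]; exact ht)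
    have hφ_int : IntervalIntegrable φ volume 0 t :=
      (hφ.mono (Icc_subset_Icc le_rfl ht.2)).intervalIntegrable_of_Icc ht.1
    calc φ t ≤ ∫ s in 0..t, (h s + K₁ + K₂ * φ s) :=
          intervalIntegral.integral_mono_on ht.1 (hψ.mono_set hsub)
            (((hh.mono_set hsub).add intervalIntegrable_const).add (hφ_int.const_mul K₂))
            fun s hs => hψh s ⟨hs.1, hs.2.trans ht.2⟩
      _ = (∫ s in 0..t, h s) + K₁ * t + K₂ * ∫ s in 0..t, φ s := by
          rw [intervalIntegral.integral_add ((hh.mono_set hsub).add intervalIntegrable_const)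
            (hφ_int.const_mul K₂), intervalIntegral.integral_add (hh.mono_set hsub)
            intervalIntegrable_const, intervalIntegral.integral_const_mul]
          simp [mul_comm]
      _ ≤ (∫ s in 0..T, h s) + K₁ * T + K₂ * ∫ s in 0..t, φ s := by
          gcongr
          · exact intervalIntegral.integral_mono_interval le_rfl ht.1 ht.2
              (ae_restrict_of_forall_mem measurableSet_Ioc
                fun s hs => hh_nonneg s (Ioc_subset_Icc_self hs)) hh
          · exact ht.2

theorem intervalIntegrable_norm_add_sq {f' b : ℝ → E} (hT : 0 ≤ T)
    (hf' : IntervalIntegrable f' volume 0 T)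
    (hf'2 : IntervalIntegrable (fun t => ‖f' t‖ ^ 2) volume 0 T) (hb : ContinuousOn b (Icc 0 T)) :
    IntervalIntegrable (fun t => ‖f' t + b t‖ ^ 2) volume 0 T := by
  rw [intervalIntegrable_iff_integrableOn_Ioc_of_le hT] at *
  have : IsFiniteMeasure (volume.restrict (Ioc 0 T)) :=
    isFiniteMeasure_restrict.2 measure_Ioc_lt_top.ne
  have hbm : AEStronglyMeasurable b (volume.restrict (Ioc 0 T)) :=
    (hb.mono Ioc_subset_Icc_self).aestronglyMeasurable measurableSet_Ioc
  obtain ⟨C, hC⟩ := isCompact_Icc.exists_bound_of_continuousOn hb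
  have hf'L2 : MemLp f' 2 (volume.restrict (Ioc 0 T)) :=
    (memLp_two_iff_integrable_sq_norm hf'.aestronglyMeasurable).2 hf'2
  have hbL2 : MemLp b 2 (volume.restrict (Ioc 0 T)) :=
    .of_bound hbm C (ae_restrict_of_forall_mem measurableSet_Ioc
      fun t ht => hC t (Ioc_subset_Icc_self ht))
  exact (memLp_two_iff_integrable_sq_norm (hf'L2.add hbL2).1).1 (hf'L2.add hbL2)

theorem integral_norm_sq_le_of_integral_norm_add_sq_le {f' b : ℝ → E} {K₁ K₂ α : ℝ}
    (hT : 0 ≤ T) (hK₁ : 0 ≤ K₁) (hK₂ : 0 ≤ K₂) (hf' : IntervalIntegrable f' volume 0 T)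
    (hf'2 : IntervalIntegrable (fun t => ‖f' t‖ ^ 2) volume 0 T) (hb : ContinuousOn b (Icc 0 T))
    (hb_le : ∀ t ∈ Icc 0 T, ‖b t‖ ≤ K₁ + K₂ * ∫ s in 0..t, ‖f' s‖)
    (hα : ∫ t in 0..T, ‖f' t + b t‖ ^ 2 ≤ α) :
    ∫ t in 0..T, ‖f' t‖ ^ 2
      ≤ 2 * α + 2 * T * (K₁ + K₂ * (((T + α) / 2 + K₁ * T) * exp (K₂ * T))) ^ 2 := by
  set D := fun t => f' t + b t
  set B := ((T + α) / 2 + K₁ * T) * exp (K₂ * T)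
  have hD2 : IntervalIntegrable (fun t => ‖D t‖ ^ 2) volume 0 T :=
    intervalIntegrable_norm_add_sq hT hf' hf'2 hb
  have hD : IntervalIntegrable (fun t => ‖D t‖) volume 0 T :=
    (hf'.add (hb.intervalIntegrable_of_Icc hT)).norm
  have hf'_le : ∀ t, ‖f' t‖ ≤ ‖D t‖ + ‖b t‖ := fun t => by
    simpa [D] using norm_sub_le (D t) (b t)
  have hα₀ : 0 ≤ α := (intervalIntegral.integral_nonneg hT fun t _ => by positivity).trans hα
  have hD_int : ∫ t in 0..T, ‖D t‖ ≤ (T + α) / 2 := by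
    linarith [intervalIntegral_le_half_add_integral_sq hT hD hD2]
  have hφ_le : ∀ t ∈ Icc 0 T, ∫ s in 0..t, ‖f' s‖ ≤ B := fun t ht => by
    calc ∫ s in 0..t, ‖f' s‖ ≤ ((∫ s in 0..T, ‖D s‖) + K₁ * T) * exp (K₂ * t) :=
          integral_le_mul_exp_of_le_add_mul_integral hT hK₁ hK₂ hf'.norm hD
            (fun _ _ => norm_nonneg _) (fun s hs => by linarith [hf'_le s, hb_le s hs]) t ht
      _ ≤ B := by
          have : 0 ≤ ∫ s in 0..T, ‖D s‖ :=
            intervalIntegral.integral_nonneg hT fun _ _ => norm_nonneg _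
          exact mul_le_mul (by linarith) (exp_le_exp.2 (by nlinarith [ht.2])) (by positivity)
            (by positivity)
  calc ∫ t in 0..T, ‖f' t‖ ^ 2 ≤ ∫ t in 0..T, (2 * ‖D t‖ ^ 2 + 2 * (K₁ + K₂ * B) ^ 2) :=
        intervalIntegral.integral_mono_on hT hf'2 ((hD2.const_mul 2).add intervalIntegrable_const)
          fun t ht => by
            have : ‖f' t‖ ≤ ‖D t‖ + (K₁ + K₂ * B) := by
              nlinarith [hf'_le t, hb_le t ht, mul_le_mul_of_nonneg_left (hφ_le t ht) hK₂]
            nlinarith [norm_nonneg (f' t), sq_nonneg (‖D t‖ - (K₁ + K₂ * B))]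
    _ ≤ 2 * α + 2 * T * (K₁ + K₂ * B) ^ 2 := by
      rw [intervalIntegral.integral_add (hD2.const_mul 2) intervalIntegrable_const,
        intervalIntegral.integral_const_mul, intervalIntegral.integral_const]
      simp only [smul_eq_mul, sub_zero]
      nlinarith

end IntervalIntegral

namespace HasL2Deriv

variable {d : ℕ} {T : ℝ} {f f' : ℝ → Ed d}

theorem continuousOn (hf : HasL2Deriv T f f') : ContinuousOn f (Icc 0 T) := by
  refine ((continuousOn_const (c := f 0)).add
    (intervalIntegral.continuousOn_primitive_interval' hf.1 left_mem_uIcc)).mono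
    Icc_subset_uIcc |>.congr fun t ht => hf.2.2 t ht

theorem norm_sub_le_integral (hf : HasL2Deriv T f f') {s t : ℝ} (hs : 0 ≤ s) (hst : s ≤ t)
    (ht : t ≤ T) : ‖f t - f s‖ ≤ ∫ u in 0..t, ‖f' u‖ := by
  have hint : ∀ r ∈ Icc 0 T, IntervalIntegrable f' volume 0 r := fun r hr =>
    hf.1.mono_set (uIcc_subset_uIcc_left (by rw [uIcc_of_le (hr.1.trans hr.2)]; exact hr))
  rw [hf.2.2 t ⟨hs.trans hst, ht⟩, hf.2.2 s ⟨hs, hst.trans ht⟩, add_sub_add_left_eq_sub,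
    intervalIntegral.integral_interval_sub_left (hint t ⟨hs.trans hst, ht⟩)
      (hint s ⟨hs, hst.trans ht⟩)]
  calc ‖∫ u in s..t, f' u‖ ≤ ∫ u in s..t, ‖f' u‖ :=
        intervalIntegral.norm_integral_le_integral_norm hst
    _ ≤ ∫ u in 0..t, ‖f' u‖ := intervalIntegral.integral_mono_interval hs hst le_rfl
        (.of_forall fun _ => norm_nonneg _) (hint t ⟨hs.trans hst, ht⟩).norm

end HasL2Deriv

def pathDrift {d : ℕ} (V F : Ed d → ℝ) (t₀ : ℝ) (μ₀ : Measure (Ed d)) (f : ℝ → Ed d) (t : ℝ) :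
    Ed d :=
  gradient V (f t) + (t₀ / (t₀ + t)) • (∫ u, gradient F (f t - u) ∂μ₀)
    + (1 / (t₀ + t)) • (∫ s in (0:ℝ)..t, gradient F (f t - f s))

section PathDrift

variable {d : ℕ} {V F : Ed d → ℝ} {KV KF : ℝ≥0} {t₀ : ℝ} {μ₀ : Measure (Ed d)} {f : ℝ → Ed d}

theorem drift_eq_add_pathDrift (f' : ℝ → Ed d) (t : ℝ) :
    drift V F t₀ μ₀ f f' t = f' t + pathDrift V F t₀ μ₀ f t := by
  simp only [drift, pathDrift, add_assoc]

variable [IsProbabilityMeasure μ₀] (hV : LipschitzWith KV (gradient V))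
  (hF : LipschitzWith KF (gradient F)) (hμ₀ : Integrable (fun u => ‖u‖) μ₀)
include hV hF hμ₀

theorem continuousOn_pathDrift (ht₀ : 0 < t₀) {T : ℝ} (hf : ContinuousOn f (Icc 0 T)) :
    ContinuousOn (pathDrift V F t₀ μ₀ f) (Icc 0 T) := by
  have hweight : ∀ c : ℝ, ContinuousOn (fun t : ℝ => c / (t₀ + t)) (Icc 0 T) := fun c =>
    continuousOn_const.div (by fun_prop) fun t ht => by linarith [ht.1]
  exact ((hV.continuous.comp_continuousOn hf).add ((hweight t₀).smul
    ((hF.integral_comp_sub hμ₀).continuous.comp_continuousOn hf))).add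
    ((hweight 1).smul (continuousOn_intervalIntegral_comp_sub hF.continuous hf))

theorem norm_pathDrift_le (ht₀ : 0 ≤ t₀) {t r : ℝ} (ht : 0 ≤ t)
    (hr : ∀ s ∈ Icc 0 t, ‖f t - f s‖ ≤ r) :
    ‖pathDrift V F t₀ μ₀ f t‖ ≤ ‖gradient V 0‖ + KV * (‖f 0‖ + r)
      + (‖gradient F 0‖ + KF * (‖f 0‖ + r) + KF * ∫ u, ‖u‖ ∂μ₀) + (‖gradient F 0‖ + KF * r) := by
  have hft : ‖f t‖ ≤ ‖f 0‖ + r := (norm_le_insert' _ _).trans (by gcongr; exact hr 0 ⟨le_rfl, ht⟩)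
  have hV_le : ‖gradient V (f t)‖ ≤ ‖gradient V 0‖ + KV * (‖f 0‖ + r) :=
    (hV.norm_le_add_mul_norm _).trans (by gcongr)
  have hmean : ‖(t₀ / (t₀ + t)) • ∫ u, gradient F (f t - u) ∂μ₀‖
      ≤ ‖gradient F 0‖ + KF * (‖f 0‖ + r) + KF * ∫ u, ‖u‖ ∂μ₀ := by
    rw [norm_smul, Real.norm_of_nonneg (by positivity)]
    refine (mul_le_of_le_one_left (norm_nonneg _)
      (div_le_one_of_le₀ (by linarith) (by positivity))).trans
      ((hF.norm_integral_comp_sub_le hμ₀ _).trans (by gcongr))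
  have hself : ‖(1 / (t₀ + t)) • ∫ s in (0:ℝ)..t, gradient F (f t - f s)‖
      ≤ ‖gradient F 0‖ + KF * r :=
    norm_one_div_add_smul_integral_le ht₀ ht fun s hs =>
      (hF.norm_le_add_mul_norm _).trans (by gcongr; exact hr s hs)
  exact norm_add₃_le.trans (add_le_add_three hV_le hmean hself)

end PathDrift

theorem stmt4_general {d : ℕ}
    (V F : Ed d → ℝ)
    (LV LF : ℝ)
    (hVlip : ∀ x y : Ed d, ‖gradient V x - gradient V y‖ ≤ LV * ‖x - y‖)
    (hFlip : ∀ x y : Ed d, ‖gradient F x - gradient F y‖ ≤ LF * ‖x - y‖)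
    (T α R M τ : ℝ) (hT : 0 < T) (hα : 0 ≤ α) (hR : 0 < R) (hM : 0 < M) (hτ : 0 < τ) :
    ∃ C > (0:ℝ),
      ∀ t₀ : ℝ, τ ≤ t₀ →
      ∀ μ₀ : Measure (Ed d), IsProbabilityMeasure μ₀ →
        Integrable (fun u => ‖u‖ ^ 2) μ₀ → (∫ u, ‖u‖ ^ 2 ∂μ₀) ≤ M →
      ∀ x₀ : Ed d, ‖x₀‖ ≤ R →
      ∀ f f' : ℝ → Ed d, f 0 = x₀ → HasL2Deriv T f f' →
        (∫ t in (0:ℝ)..T, ‖drift V F t₀ μ₀ f f' t‖ ^ 2) ≤ α →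
        (∫ s in (0:ℝ)..T, ‖f' s‖ ^ 2) ≤ C := by
  obtain ⟨KV, hV⟩ : ∃ K : ℝ≥0, LipschitzWith K (gradient V) :=
    ⟨_, .of_dist_le' fun x y => by simpa only [dist_eq_norm] using hVlip x y⟩
  obtain ⟨KF, hF⟩ : ∃ K : ℝ≥0, LipschitzWith K (gradient F) :=
    ⟨_, .of_dist_le' fun x y => by simpa only [dist_eq_norm] using hFlip x y⟩
  set K₁ : ℝ := ‖gradient V 0‖ + KV * R + 2 * ‖gradient F 0‖ + KF * R + KF * ((1 + M) / 2)
  set K₂ : ℝ := KV + 2 * KF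
  have hK₁ : 0 ≤ K₁ := by positivity
  have hK₂ : 0 ≤ K₂ := by positivity
  refine ⟨2 * α + 2 * T * (K₁ + K₂ * (((T + α) / 2 + K₁ * T) * exp (K₂ * T))) ^ 2 + 1,
    by positivity, fun t₀ ht₀ μ₀ _ hμ₀2 hμ₀M x₀ hx₀ f f' hf0 hf hJ => ?_⟩
  obtain ⟨hμ₀, hm₁⟩ := integral_norm_le_of_integrable_norm_sq hμ₀2
  have hb_le (t : ℝ) (ht : t ∈ Icc 0 T) :
      ‖pathDrift V F t₀ μ₀ f t‖ ≤ K₁ + K₂ * ∫ s in 0..t, ‖f' s‖ := by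
    refine (norm_pathDrift_le hV hF hμ₀ (hτ.le.trans ht₀) ht.1
      fun s hs => hf.norm_sub_le_integral hs.1 hs.2 ht.2).trans ?_
    rw [hf0]
    simp only [K₁, K₂]
    have : KV * ‖x₀‖ ≤ KV * R := by gcongr
    have : KF * ‖x₀‖ ≤ KF * R := by gcongr
    have : KF * ∫ u, ‖u‖ ∂μ₀ ≤ KF * ((1 + M) / 2) := by gcongr; linarith
    linarith
  have := integral_norm_sq_le_of_integral_norm_add_sq_le hT.le hK₁ hK₂ hf.1 hf.2.1
    (continuousOn_pathDrift hV hF hμ₀ (hτ.trans_le ht₀) hf.continuousOn) hb_le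
    (by simpa only [drift_eq_add_pathDrift] using hJ)
  linarith

/-- coercivity of the rate function — a uniform bound on the `L²` norm of
the derivative over all paths with rate function at most `α`, starting points in a ball
of radius `R`, initial measures with second moment at most `M`, and past-times `t₀ ≥ τ`. -/
theorem stmt4 {d : ℕ} (hd : 1 ≤ d)
    (V F : Ed d → ℝ) (hV : ContDiff ℝ 2 V) (hF : ContDiff ℝ 2 F)
    (LV LF : ℝ) (hLV : 0 ≤ LV) (hLF : 0 ≤ LF)
    (hVlip : ∀ x y : Ed d, ‖gradient V x - gradient V y‖ ≤ LV * ‖x - y‖)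
    (hFlip : ∀ x y : Ed d, ‖gradient F x - gradient F y‖ ≤ LF * ‖x - y‖)
    (T α R M τ : ℝ) (hT : 0 < T) (hα : 0 ≤ α) (hR : 0 < R) (hM : 0 < M) (hτ : 0 < τ) :
    ∃ C > (0:ℝ),
      ∀ t₀ : ℝ, τ ≤ t₀ →
      ∀ μ₀ : Measure (Ed d), IsProbabilityMeasure μ₀ →
        Integrable (fun u => ‖u‖ ^ 2) μ₀ → (∫ u, ‖u‖ ^ 2 ∂μ₀) ≤ M →
      ∀ x₀ : Ed d, ‖x₀‖ ≤ R →
      ∀ f f' : ℝ → Ed d, f 0 = x₀ → HasL2Deriv T f f' →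
        (∫ t in (0:ℝ)..T, ‖drift V F t₀ μ₀ f f' t‖ ^ 2) ≤ α →
        (∫ s in (0:ℝ)..T, ‖f' s‖ ^ 2) ≤ C :=
  stmt4_general V F LV LF hVlip hFlip T α R M τ hT hα hR hM hτ
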